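/- Let Δ=δ₁δ₂…∈{0,1}^ℕ and Θ=ϑ₁ϑ₂…∈{E,R}^ℕ, and assume both E and R occur infinitely many times in Θ. Suppose that for every a∈{0,1}, every ϑ∈{E,R} and every n₀∈ℕ there exists n>n₀ such that (δ_{n+1}=a and ϑ_n=ϑ̄) or (δ_{n+1}=ā and ϑ_n=ϑ), where ā denotes the letter distinct from a and ϑ̄ the antimorphism distinct from ϑ (i.e., the equivalence 'δ_{n+1}=a iff ϑ_n=ϑ' eventually holds for no choice of a and ϑ). Then every prefix of u(Δ,Θ) is a left special factor of u(Δ,Θ); consequently u(Δ,Θ) is aperiodic. -/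

import Mathlib

/-!
Generalized pseudostandard words (de Luca–De Luca) over binary and ternary
alphabets: antimorphisms, pseudopalindromic closure, directive bi-sequences.
-/

namespace GPS

variable {A : Type*} [Inhabited A]

/-- The involutory antimorphism on finite words induced by the letter map `f`:
reverse the word and apply `f` letterwise. -/
def anti (f : A → A) (w : List A) : List A := (w.map f).reverse

/-- `w` is an `f`-palindrome (a `ϑ`-palindrome for the antimorphism induced by `f`). -/
def IsPal (f : A → A) (w : List A) : Prop := anti f w = w

/-- The `f`-palindromic closure of `w`: a shortest `f`-palindrome having `w` as a
prefix (returns `w` itself in the degenerate case where none exists). -/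
noncomputable def closure (f : A → A) (w : List A) : List A := by
  classical
  exact if h : ∃ n : ℕ, ∃ p : List A, p.length = n ∧ w <+: p ∧ IsPal f p then
    Classical.choose (Nat.find_spec h)
  else w

/-- The sequence of pseudopalindromic prefixes `w_n` of the generalized
pseudostandard word `u(Δ, Θ)`; `prefixes Δ Θ n` is the paper's `w_n`, with
`Δ n = δ_{n+1}` and `Θ n = ϑ_{n+1}` (0-based indexing of the bi-sequence). -/
noncomputable def prefixes (Δ : ℕ → A) (Θ : ℕ → A → A) : ℕ → List A
  | 0 => []
  | n + 1 => closure (Θ n) (prefixes Δ Θ n ++ [Δ n])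

/-- The generalized pseudostandard word `u(Δ, Θ)` as an infinite word `ℕ → A`. -/
noncomputable def word (Δ : ℕ → A) (Θ : ℕ → A → A) (k : ℕ) : A :=
  (prefixes Δ Θ (k + 1)).getD k default

/-- `p` is a (finite) prefix of the infinite word `x`. -/
def IsPref (p : List A) (x : ℕ → A) : Prop := ∀ i < p.length, p.getD i default = x i

/-- `w` is a factor of the infinite word `x`. -/
def IsFactor (w : List A) (x : ℕ → A) : Prop :=
  ∃ i : ℕ, ∀ j < w.length, w.getD j default = x (i + j)

/-- `w` is a left special factor of the infinite word `x`. -/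
def LeftSpecial (w : List A) (x : ℕ → A) : Prop :=
  ∃ a b : A, a ≠ b ∧ IsFactor (a :: w) x ∧ IsFactor (b :: w) x

/-- The infinite word `x` is (eventually) periodic, i.e. of the form `z v^ω`
with `v` nonempty. -/
def Periodic (x : ℕ → A) : Prop :=
  ∃ p : ℕ, 0 < p ∧ ∃ N : ℕ, ∀ n, N ≤ n → x (n + p) = x n

/-- The infinite word `x` is purely periodic with period `q`, i.e. `x = q^ω`. -/
def PurePeriod (q : List A) (x : ℕ → A) : Prop :=
  q ≠ [] ∧ ∀ i : ℕ, x i = q.getD (i % q.length) default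

/-- Concatenation of `k` copies of the finite word `l`, i.e. `l^k`. -/
def wpow (l : List A) (k : ℕ) : List A := (List.replicate k l).flatten

/-! ### The binary alphabet `{0,1}` -/

/-- Letter map of the reversal antimorphism `R` over `{0,1}`. -/
def Rb : Fin 2 → Fin 2 := id

/-- Letter map of the exchange antimorphism `E` over `{0,1}` (`0 ↔ 1`). -/
def Eb : Fin 2 → Fin 2 := fun x => x + 1

/-- A binary directive bi-sequence is normalized if the sequence `(w_n)` contains
every prefix of `u(Δ,Θ)` that is an `R`-palindrome or an `E`-palindrome. -/
def NormalizedB (Δ : ℕ → Fin 2) (Θ : ℕ → Fin 2 → Fin 2) : Prop :=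
  ∀ p : List (Fin 2), IsPref p (word Δ Θ) → (IsPal Rb p ∨ IsPal Eb p) →
    ∃ n : ℕ, prefixes Δ Θ n = p

/-! ### The ternary alphabet `{0,1,2}` -/

/-- Letter map of the reversal antimorphism `R` over `{0,1,2}`. -/
def Rt : Fin 3 → Fin 3 := id

/-- Letter map of the exchange antimorphism `E_i` over `{0,1,2}`: it fixes `i`
and exchanges the other two letters (indeed `-(i+x) = i` iff `x = i` in `Fin 3`). -/
def Et (i : Fin 3) : Fin 3 → Fin 3 := fun x => -(i + x)

/-- A ternary directive bi-sequence is normalized if the sequence `(w_n)` contains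
every prefix of `u(Δ,Θ)` that is a `ϑ`-palindrome for some involutory antimorphism `ϑ`. -/
def NormalizedT (Δ : ℕ → Fin 3) (Θ : ℕ → Fin 3 → Fin 3) : Prop :=
  ∀ p : List (Fin 3), IsPref p (word Δ Θ) → (IsPal Rt p ∨ ∃ i : Fin 3, IsPal (Et i) p) →
    ∃ n : ℕ, prefixes Δ Θ n = p

end GPS

/-!
Write `w n = prefixes Δ Θ n`, so that `w (n + 1)` is a `Θ n`-palindrome. If `p` is a prefix of
the word with `|p| ≤ n + 1`, then `p` is a prefix of `w (n + 1)`, hence `anti (Θ n) p` is a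
suffix of it, and since `w (n + 1) ++ [Δ (n + 1)]` is a prefix of the word,
`anti (Θ n) p ++ [Δ (n + 1)]` is a factor. Reflecting it in a later palindrome `w (k + 1)`
with `Θ k = Θ n` shows that `Θ n (Δ (n + 1)) :: p` is a factor. The hypothesis on the
bi-sequence says exactly that every letter equals `Θ n (Δ (n + 1))` for arbitrarily large `n`,
so every prefix is left special.

An eventually periodic word whose prefixes all reoccur at positive positions is purely periodic,
with some period `s`; but then every occurrence of its prefix of length `s` is preceded by the
letter at position `s - 1`, so that prefix is not left special.
-/

namespace GPS

lemma _root_.List.IsPrefix.getD_eq {A : Type*} {l₁ l₂ : List A} (h : l₁ <+: l₂) {i : ℕ}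
    (hi : i < l₁.length) (d : A) : l₁.getD i d = l₂.getD i d := by
  rw [List.getD_eq_getElem _ _ hi, List.getD_eq_getElem _ _ (hi.trans_le h.length_le), h.getElem]

section Antimorphism

variable {A : Type*} {f : A → A}

lemma anti_append (f : A → A) (u v : List A) : anti f (u ++ v) = anti f v ++ anti f u := by
  simp [anti]

lemma anti_anti (hf : Function.Involutive f) (w : List A) : anti f (anti f w) = w := by
  simp [anti, List.map_reverse, hf.comp_self]

lemma isPal_append_anti (hf : Function.Involutive f) (w : List A) : IsPal f (w ++ anti f w) := by
  rw [IsPal, anti_append, anti_anti hf]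

lemma IsPal.anti_infix {W v : List A} (hW : IsPal f W) (hv : v <:+: W) : anti f v <:+: W := by
  obtain ⟨s, t, rfl⟩ := hv
  rw [← hW]
  simpa only [anti_append, List.append_assoc] using
    List.infix_append (anti f t) (anti f v) (anti f s)

lemma IsPal.anti_suffix {W p : List A} (hW : IsPal f W) (hp : p <+: W) : anti f p <:+ W := by
  obtain ⟨t, rfl⟩ := hp
  rw [← hW, anti_append]
  exact List.suffix_append _ _

lemma prefix_closure_and_isPal (hf : Function.Involutive f) (w : List A) :
    w <+: closure f w ∧ IsPal f (closure f w) := by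
  classical
  have h : ∃ n, ∃ p : List A, p.length = n ∧ w <+: p ∧ IsPal f p :=
    ⟨_, _, rfl, List.prefix_append _ _, isPal_append_anti hf w⟩
  rw [closure, dif_pos h]
  exact (Classical.choose_spec (Nat.find_spec h)).2

end Antimorphism

section InfiniteWords

variable {A : Type*} [Inhabited A] {x : ℕ → A}

lemma IsPref.prefix_of_length_le {p W : List A} (hp : IsPref p x) (hW : IsPref W x)
    (hle : p.length ≤ W.length) : p <+: W := by
  refine List.prefix_iff_getElem.2 ⟨hle, fun i hi => ?_⟩
  have := (hp i hi).trans (hW i (hi.trans_le hle)).symm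
  rwa [List.getD_eq_getElem _ _ hi, List.getD_eq_getElem _ _ (hi.trans_le hle)] at this

lemma IsPref.isFactor_of_infix {v W : List A} (hW : IsPref W x) (hv : v <:+: W) :
    IsFactor v x := by
  obtain ⟨s, t, rfl⟩ := hv
  refine ⟨s.length, fun j hj => ?_⟩
  rw [← hW _ (by simp; omega), List.append_assoc, List.getD_append_right _ _ _ _ (by omega),
    Nat.add_sub_cancel_left, List.getD_append _ _ _ _ hj]

end InfiniteWords

section PseudostandardWords

variable {A : Type*} {Δ : ℕ → A} {Θ : ℕ → A → A}

lemma append_prefix_prefixes_succ (hΘ : ∀ n, Function.Involutive (Θ n)) (n : ℕ) :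
    prefixes Δ Θ n ++ [Δ n] <+: prefixes Δ Θ (n + 1) :=
  (prefix_closure_and_isPal (hΘ n) _).1

lemma isPal_prefixes_succ (hΘ : ∀ n, Function.Involutive (Θ n)) (n : ℕ) :
    IsPal (Θ n) (prefixes Δ Θ (n + 1)) :=
  (prefix_closure_and_isPal (hΘ n) _).2

lemma prefixes_prefix_of_le (hΘ : ∀ n, Function.Involutive (Θ n)) {m n : ℕ}
    (h : m ≤ n) :
    prefixes Δ Θ m <+: prefixes Δ Θ n := by
  induction n, h using Nat.le_induction with
  | base => exact List.prefix_rfl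
  | succ n _ ih =>
    exact ih.trans ((List.prefix_append _ _).trans (append_prefix_prefixes_succ hΘ n))

lemma le_length_prefixes (hΘ : ∀ n, Function.Involutive (Θ n)) (n : ℕ) :
    n ≤ (prefixes Δ Θ n).length := by
  induction n with
  | zero => exact Nat.zero_le _
  | succ n ih =>
    have := (append_prefix_prefixes_succ (Δ := Δ) hΘ n).length_le
    simp only [List.length_append, List.length_singleton] at this
    omega

variable [Inhabited A]

lemma isPref_prefixes (hΘ : ∀ n, Function.Involutive (Θ n)) (n : ℕ) :
    IsPref (prefixes Δ Θ n) (word Δ Θ) := by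
  intro i hi
  rcases le_total n (i + 1) with h | h
  · exact (prefixes_prefix_of_le hΘ h).getD_eq hi _
  · exact ((prefixes_prefix_of_le hΘ h).getD_eq (le_length_prefixes hΘ (i + 1)) _).symm

lemma isFactor_cons_of_apply_eq (hΘ : ∀ n, Function.Involutive (Θ n)) {p : List A}
    (hp : IsPref p (word Δ Θ)) {n k : ℕ} (hpn : p.length ≤ n + 1) (hnk : n < k)
    (hΘk : Θ k = Θ n) : IsFactor (Θ n (Δ (n + 1)) :: p) (word Δ Θ) := by
  have hpW : p <+: prefixes Δ Θ (n + 1) :=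
    hp.prefix_of_length_le (isPref_prefixes hΘ _) (hpn.trans (le_length_prefixes hΘ _))
  obtain ⟨s, hs⟩ := (isPal_prefixes_succ hΘ n).anti_suffix hpW
  have hinfix : anti (Θ n) p ++ [Δ (n + 1)] <:+: prefixes Δ Θ (k + 1) := by
    have hnext : prefixes Δ Θ (n + 1) ++ [Δ (n + 1)] <+: prefixes Δ Θ (k + 1) :=
      (append_prefix_prefixes_succ hΘ (n + 1)).trans (prefixes_prefix_of_le hΘ (by omega))
    refine List.IsInfix.trans ⟨s, [], ?_⟩ hnext.isInfix
    simp [← hs]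
  have hrefl := (isPal_prefixes_succ hΘ k).anti_infix hinfix
  rw [hΘk, anti_append, anti_anti (hΘ n)] at hrefl
  exact (isPref_prefixes hΘ _).isFactor_of_infix hrefl

end PseudostandardWords

lemma eq_of_eqOn_window_of_periodic {A : Type*} {y z : ℕ → A} {N q : ℕ} (hq : 0 < q)
    (hy : ∀ n, N ≤ n → y (n + q) = y n) (hz : ∀ n, N ≤ n → z (n + q) = z n)
    (hyz : ∀ t < N + q, y t = z t) (t : ℕ) : y t = z t := by
  induction t using Nat.strong_induction_on with
  | _ t ih =>
    rcases lt_or_ge t (N + q) with ht | ht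
    · exact hyz t ht
    · obtain ⟨n, rfl⟩ : ∃ n, t = n + q := ⟨t - q, by omega⟩
      rw [hy n (by omega), hz n (by omega), ih n (by omega)]

section Periodicity

variable {A : Type*} [Inhabited A] {x : ℕ → A}

lemma isPref_range_map (x : ℕ → A) (L : ℕ) : IsPref ((List.range L).map x) x := by
  intro i hi
  simp_all

lemma IsFactor.exists_cons_range_map {a : A} {L : ℕ}
    (h : IsFactor (a :: (List.range L).map x) x) :
    ∃ i, x i = a ∧ ∀ t < L, x (i + 1 + t) = x t := by
  obtain ⟨i, hi⟩ := h
  refine ⟨i, by simpa using (hi 0 (by simp)).symm, fun t ht => ?_⟩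
  have := hi (t + 1) (by simpa using ht)
  rw [List.getD_cons_succ, List.getD_eq_getElem _ _ (by simpa using ht), List.getElem_map,
    List.getElem_range] at this
  exact (congrArg x (by omega)).trans this.symm

lemma Periodic.exists_period_of_forall_leftSpecial (hx : Periodic x)
    (hls : ∀ p, IsPref p x → LeftSpecial p x) : ∃ s, 0 < s ∧ ∀ t, x (t + s) = x t := by
  obtain ⟨q, hq, N, hN⟩ := hx
  obtain ⟨a, -, -, ha, -⟩ := hls _ (isPref_range_map x (N + q))
  obtain ⟨i, -, hi⟩ := ha.exists_cons_range_map
  have hshift : ∀ n, N ≤ n → x (i + 1 + (n + q)) = x (i + 1 + n) := fun n _ => by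
    rw [← Nat.add_assoc, hN _ (by omega)]
  refine ⟨i + 1, by omega, fun t => ?_⟩
  rw [Nat.add_comm]
  exact (eq_of_eqOn_window_of_periodic (z := fun t => x (i + 1 + t)) hq hN hshift
    (fun t ht => (hi t ht).symm) t).symm

lemma not_leftSpecial_range_map_of_period {s : ℕ} (hs : 0 < s) (hx : ∀ t, x (t + s) = x t) :
    ¬ LeftSpecial ((List.range s).map x) x := by
  have hletter : ∀ c, IsFactor (c :: (List.range s).map x) x → c = x (s - 1) := by
    intro c hc
    obtain ⟨i, rfl, hi⟩ := hc.exists_cons_range_map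
    have hshift := eq_of_eqOn_window_of_periodic (N := 0) (z := fun t => x (i + 1 + t)) hs
      (fun n _ => hx n) (fun n _ => by rw [← Nat.add_assoc, hx])
      (fun t ht => (hi t (by omega)).symm) (s - 1)
    rw [← hx i, hshift]
    congr 1
    omega
  rintro ⟨a, b, hab, ha, hb⟩
  exact hab ((hletter a ha).trans (hletter b hb).symm)

theorem not_periodic_of_forall_leftSpecial (hls : ∀ p, IsPref p x → LeftSpecial p x) :
    ¬ Periodic x := by
  intro hx
  obtain ⟨s, hs, hper⟩ := hx.exists_period_of_forall_leftSpecial hls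
  exact not_leftSpecial_range_map_of_period hs hper (hls _ (isPref_range_map x s))

end Periodicity

/-- if both `E` and `R` occur infinitely many times in `Θ` and for
every `a`, `ϑ` (with complementary letter `ā = Eb a` and antimorphism `ϑ̄ = ϑ'`)
and every `n₀` there is `n > n₀` with `(δ_{n+1} = a ∧ ϑ_n = ϑ̄) ∨ (δ_{n+1} = ā ∧ ϑ_n = ϑ)`,
then every prefix of `u(Δ,Θ)` is a left special factor; consequently `u(Δ,Θ)` is
aperiodic. -/
theorem aperiodic_binary_left_special (Δ : ℕ → Fin 2) (Θ : ℕ → Fin 2 → Fin 2)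
    (hΘ : ∀ n, Θ n = Rb ∨ Θ n = Eb)
    (hinfE : {n | Θ n = Eb}.Infinite) (hinfR : {n | Θ n = Rb}.Infinite)
    (hneg : ∀ (a : Fin 2) (ϑ ϑ' : Fin 2 → Fin 2),
      ((ϑ = Rb ∧ ϑ' = Eb) ∨ (ϑ = Eb ∧ ϑ' = Rb)) →
      ∀ n₀ : ℕ, ∃ n, n₀ ≤ n ∧
        ((Δ (n + 1) = a ∧ Θ n = ϑ') ∨ (Δ (n + 1) = Eb a ∧ Θ n = ϑ))) :
    (∀ p : List (Fin 2), IsPref p (word Δ Θ) → LeftSpecial p (word Δ Θ)) ∧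
    ¬ Periodic (word Δ Θ) := by
  have hinv : ∀ n, Function.Involutive (Θ n) := fun n x => by
    rcases hΘ n with h | h <;> rw [h] <;> fin_cases x <;> rfl
  have hrecur : ∀ n, ∃ k, n < k ∧ Θ k = Θ n := fun n => by
    rcases hΘ n with h | h
    · obtain ⟨k, hk, hnk⟩ := hinfR.exists_gt n
      exact ⟨k, hnk, hk.trans h.symm⟩
    · obtain ⟨k, hk, hnk⟩ := hinfE.exists_gt n
      exact ⟨k, hnk, hk.trans h.symm⟩
  have hls : ∀ p, IsPref p (word Δ Θ) → LeftSpecial p (word Δ Θ) := by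
    intro p hp
    have hcons : ∀ a, IsFactor (a :: p) (word Δ Θ) := by
      intro a
      obtain ⟨n, hn, hcase⟩ := hneg a Eb Rb (Or.inr ⟨rfl, rfl⟩) p.length
      have ha : Θ n (Δ (n + 1)) = a := by
        rcases hcase with ⟨hΔ, h⟩ | ⟨hΔ, h⟩ <;> rw [hΔ]
        · rw [h]; rfl
        · rw [← h]; exact hinv n a
      obtain ⟨k, hnk, hk⟩ := hrecur n
      simpa only [ha] using isFactor_cons_of_apply_eq hinv hp (by omega) hnk hk
    exact ⟨0, 1, by decide, hcons 0, hcons 1⟩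
  exact ⟨hls, not_periodic_of_forall_leftSpecial hls⟩

end GPS
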